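/- arXiv:1904.09017 — 9 statements merged into one kernel-verified Lean document; each statement's English description precedes it below -/
import Mathlib

section
/- Let V be a vector space over a field K, E a set, (W x)_{x ∈ E} a family of K-subspaces of V, and z ∈ E a fixed element. Then the family (W x)_{x ∈ E} is independent (i.e. for every x ∈ E, W x ⊓ (⨆_{y ∈ E, y ≠ x} W y) = ⊥, equivalently the canonical map ⨁_{x ∈ E} W x → V sending a finitely supported family to its sum is injective) if and only if for every x ∈ E with x ≠ z one has W x ⊓ (⨆_{y ∈ E, y ≠ x} W y) = ⊥. -/
/-!
Independence is injectivity of the summation map `⨁ᵢ W i → V`. If `f` lies in its kernel, each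
component `f i` is minus the sum of the others, so it lies in `W i ⊓ ⨆_{j ≠ i} W j`; hence `f` is
supported on `{z}`, and then `f z = ∑ f = 0`.
-/

namespace Submodule

open DFinsupp

variable {R N ι : Type*} [Ring R] [AddCommGroup N] [Module R N] [DecidableEq ι]

theorem coe_apply_mem_iSup_ne_of_lsum_eq_zero {p : ι → Submodule R N} {f : Π₀ i, p i}
    (hf : lsum ℕ (fun i => (p i).subtype) f = 0) (i : ι) :
    (f i : N) ∈ ⨆ (j) (_ : j ≠ i), p j := by
  have herase : lsum ℕ (fun i => (p i).subtype) (f.erase i) = -(f i : N) := by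
    rwa [← erase_add_single i f, map_add, lsum_single, subtype_apply,
      add_eq_zero_iff_eq_neg] at hf
  rw [← neg_mem_iff, ← herase, mem_biSup_iff_exists_dfinsupp]
  exact ⟨f, congrArg _ (filter_ne_eq_erase f i)⟩

theorem iSupIndep_of_forall_ne_disjoint {p : ι → Submodule R N} (z : ι)
    (h : ∀ i ≠ z, Disjoint (p i) (⨆ (j) (_ : j ≠ i), p j)) : iSupIndep p := by
  rw [iSupIndep_iff_dfinsupp_lsum_injective, ← LinearMap.ker_eq_bot, LinearMap.ker_eq_bot']
  intro f hf
  have hne : ∀ i ≠ z, f i = 0 := fun i hi => Subtype.ext <|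
    disjoint_def.mp (h i hi) _ (f i).2 (coe_apply_mem_iSup_ne_of_lsum_eq_zero hf i)
  have hsingle : f = single z (f z) := by
    ext i : 1
    rcases eq_or_ne i z with rfl | hi
    · rw [single_eq_same]
    · rw [hne i hi, single_eq_of_ne hi]
  rw [hsingle, lsum_single, subtype_apply, ZeroMemClass.coe_eq_zero] at hf
  rw [hsingle, hf, single_zero]

end Submodule

/-- A family `(W x)_{x ∈ E}` of subspaces is independent (every member
intersects the sum of the others trivially) iff this holds for every `x ≠ z`,
for a fixed `z ∈ E`. -/
theorem stmt_0 {K V E : Type*} [Field K] [AddCommGroup V] [Module K V]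
    (W : E → Submodule K V) (z : E) :
    (∀ x : E, W x ⊓ (⨆ y, ⨆ _ : y ≠ x, W y) = ⊥) ↔
      (∀ x : E, x ≠ z → W x ⊓ (⨆ y, ⨆ _ : y ≠ x, W y) = ⊥) := by
  classical
  simp_rw [← disjoint_iff, ← iSupIndep_def]
  exact ⟨fun h x _ => h x, Submodule.iSupIndep_of_forall_ne_disjoint z⟩
end

section
/- Let 𝒜 be a finite partially ordered set, V a vector space over a field K, and W : 𝒜 → Submodule K V a monotone map. Then W is decomposable if and only if W satisfies condition (C). -/
/-!
Only the lattice structure of submodules matters: complete, modular, complemented and compactly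
generated. If `W a = ⨆ b ≤ a, s b` with `s` independent, then by modularity
`W a ⊓ ⨆ (b ≠ a), s b = (⨆ b < a, s b) ⊔ (s a ⊓ ⨆ (b ≠ a), s b)`, and the last term vanishes;
this gives (C). Conversely, let `s a` be a complement of `⨆ b < a, W b` inside `W a`. Induction
over the finite poset gives `W a = ⨆ b ≤ a, s b`, and (C) says that `s a` is disjoint from
everything not above `a`, in particular from all predecessors of `a` in a linear extension of the
order; disjointness from predecessors in a linear order implies independence.
-/

section CompleteLattice

variable {α ι : Type*} [CompleteLattice α]

theorem iSupIndep_of_disjoint_biSup_lt [IsModularLattice α] [IsCompactlyGenerated α]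
    [LinearOrder ι] {f : ι → α} (h : ∀ i, Disjoint (f i) (⨆ j < i, f j)) : iSupIndep f := by
  classical
  refine iSupIndep_iff_supIndep.2 fun s => ?_
  induction s using Finset.induction_on_max with
  | empty => exact Finset.supIndep_empty f
  | insert a s hlt ih =>
    exact ih.insert <| (h a).mono_right <|
      Finset.sup_le fun j hj => le_iSup₂_of_le j (hlt j hj) le_rfl

theorem iSupIndep_of_disjoint_biSup_not_ge [IsModularLattice α] [IsCompactlyGenerated α]
    [PartialOrder ι] {f : ι → α} (h : ∀ i, Disjoint (f i) (⨆ (j) (_ : ¬ i ≤ j), f j)) :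
    iSupIndep f := by
  -- `LinearExtension ι` is `ι` itself with a linear order refining `≤`.
  refine iSupIndep_of_disjoint_biSup_lt (ι := LinearExtension ι) (f := f) fun i =>
    (h i).mono_right ?_
  refine iSup₂_le fun j (hji : j < i) =>
    le_iSup₂_of_le (f := fun j (_ : ¬ @LE.le ι _ i j) => f j) j ?_ le_rfl
  exact fun hij => (toLinearExtension.monotone hij).not_gt hji

variable [PartialOrder ι] {W s : ι → α}

theorem inf_biSup_not_ge_le_biSup_lt_of_iSupIndep [IsModularLattice α] (hs : iSupIndep s)
    (hWs : ∀ a, W a = ⨆ b ≤ a, s b) (a : ι) :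
    W a ⊓ (⨆ (b) (_ : ¬ a ≤ b), W b) ≤ ⨆ b < a, W b := by
  have hsW : ∀ b, s b ≤ W b := fun b => (hWs b).ge.trans' (le_iSup₂_of_le b le_rfl le_rfl)
  have hpred : (⨆ b < a, s b) ≤ ⨆ (b) (_ : b ≠ a), s b :=
    iSup₂_le fun b hb => le_iSup₂_of_le b hb.ne le_rfl
  have hrest : (⨆ (b) (_ : ¬ a ≤ b), W b) ≤ ⨆ (b) (_ : b ≠ a), s b :=
    iSup₂_le fun b hab => (hWs b).le.trans <| iSup₂_le fun c hcb =>
      le_iSup₂_of_le c (by rintro rfl; exact hab hcb) le_rfl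
  calc W a ⊓ (⨆ (b) (_ : ¬ a ≤ b), W b)
      ≤ ((⨆ b < a, s b) ⊔ s a) ⊓ ⨆ (b) (_ : b ≠ a), s b := by
        rw [hWs a, biSup_le_eq_sup]; exact inf_le_inf_left _ hrest
    _ = (⨆ b < a, s b) ⊔ s a ⊓ ⨆ (b) (_ : b ≠ a), s b := sup_inf_assoc_of_le _ hpred
    _ = ⨆ b < a, s b := by rw [(hs a).eq_bot, sup_bot_eq]
    _ ≤ ⨆ b < a, W b := iSup₂_mono fun b _ => hsW b

theorem eq_biSup_le_of_biSup_lt_sup_eq [WellFoundedLT ι]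
    (hsup : ∀ a, (⨆ b < a, W b) ⊔ s a = W a) (a : ι) : W a = ⨆ b ≤ a, s b := by
  have hsW : ∀ b, s b ≤ W b := fun b => (hsup b).le.trans' le_sup_right
  induction a using WellFoundedLT.induction with
  | ind a ih =>
    have hpred : (⨆ b < a, W b) = ⨆ b < a, s b :=
      le_antisymm
        (iSup₂_le fun b hb => (ih b hb).le.trans <| iSup₂_le fun c hcb =>
          le_iSup₂_of_le c (hcb.trans_lt hb) le_rfl)
        (iSup₂_mono fun b _ => hsW b)
    rw [biSup_le_eq_sup, ← hpred, hsup]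

theorem iSupIndep_of_inf_biSup_not_ge_le_biSup_lt [IsModularLattice α] [IsCompactlyGenerated α]
    (hC : ∀ a, W a ⊓ (⨆ (b) (_ : ¬ a ≤ b), W b) ≤ ⨆ b < a, W b) (hsW : ∀ a, s a ≤ W a)
    (hdisj : ∀ a, Disjoint (⨆ b < a, W b) (s a)) : iSupIndep s :=
  iSupIndep_of_disjoint_biSup_not_ge fun a => disjoint_iff_inf_le.2 <|
    (le_inf inf_le_left <| (inf_le_inf (hsW a) (iSup₂_mono fun b _ => hsW b)).trans (hC a)).trans
      (hdisj a).symm.le_bot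

end CompleteLattice

/-- For a finite poset `𝒜`, a monotone `W : 𝒜 → Submodule K V` is
decomposable iff it satisfies condition (C). -/
theorem stmt_1 {K V A : Type*} [Field K] [AddCommGroup V] [Module K V]
    [PartialOrder A] [Finite A]
    (W : A → Submodule K V) (hW : Monotone W) :
    (∃ s : A → Submodule K V,
        (∀ a : A, s a ⊓ (⨆ b, ⨆ _ : b ≠ a, s b) = ⊥) ∧
        (∀ a : A, W a = ⨆ b, ⨆ _ : b ≤ a, s b)) ↔
      (∀ a : A, W a ⊓ (⨆ b, ⨆ _ : ¬ a ≤ b, W b) ≤ ⨆ b, ⨆ _ : b < a, W b) := by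
  simp_rw [← disjoint_iff, ← iSupIndep_def]
  constructor
  · rintro ⟨s, hs, hWs⟩
    exact inf_biSup_not_ge_le_biSup_lt_of_iSupIndep hs hWs
  · intro hC
    choose s hdisj hsup using fun a =>
      IsModularLattice.exists_disjoint_and_sup_eq (iSup₂_le fun b (hb : b < a) => hW hb.le)
    exact ⟨s, iSupIndep_of_inf_biSup_not_ge_le_biSup_lt hC
      (fun a => (hsup a).le.trans' le_sup_right) hdisj, eq_biSup_le_of_biSup_lt_sup_eq hsup⟩
end

section
/- Let 𝒜 be a finite partially ordered set, V a vector space over a field K, and W : 𝒜 → Submodule K V a monotone map. Then W satisfies the intersection property (I) if and only if W satisfies condition (C). -/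
/-!
(I) ⇒ (C) is (I) for the lower sets `Iic a` and `(Ici a)ᶜ`, whose intersection is `Iio a`.

(C) ⇒ (I) holds in any complete modular lattice, by induction on `B`. If `B ⊄ C`, let `a` be
maximal in `B \ C`; it is maximal in `B`, so `B' = B \ {a}` is a lower set with
`B' ∩ C = B ∩ C`, and every element of `B' ∪ C` lies outside `Ici a`. Hence (C) gives
`W a ⊓ (W(B') ⊔ W(C)) ≤ W(Iio a) ≤ W(B')`, and the modular law turns this into
`(W a ⊔ W(B')) ⊓ W(C) ≤ W(B') ⊓ W(C)`, to which the induction hypothesis applies.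
-/

open Set

theorem sup_inf_le_inf_of_inf_sup_le {α : Type*} [Lattice α] [IsModularLattice α]
    {a x y : α} (h : a ⊓ (x ⊔ y) ≤ x) : (a ⊔ x) ⊓ y ≤ x ⊓ y := by
  refine le_inf ?_ inf_le_right
  calc (a ⊔ x) ⊓ y ≤ (x ⊔ a) ⊓ (x ⊔ y) := by rw [sup_comm]; exact inf_le_inf_left _ le_sup_right
    _ = x ⊔ a ⊓ (x ⊔ y) := sup_inf_assoc_of_le a le_sup_left
    _ = x := sup_eq_left.2 h

section

variable {ι α : Type*} [PartialOrder ι] [CompleteLattice α] (W : ι → α)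

theorem inf_iSup_not_ge_le_iSup_lt_of_inf_biSup_le
    (hI : ∀ B C : Set ι, IsLowerSet B → IsLowerSet C →
      (⨆ b ∈ B, W b) ⊓ (⨆ c ∈ C, W c) ≤ ⨆ a ∈ B ∩ C, W a) (a : ι) :
    W a ⊓ (⨆ b, ⨆ _ : ¬ a ≤ b, W b) ≤ ⨆ b, ⨆ _ : b < a, W b := by
  have hIio : Iic a ∩ (Ici a)ᶜ = Iio a := by ext; simp [lt_iff_le_not_ge]
  calc W a ⊓ (⨆ b, ⨆ _ : ¬ a ≤ b, W b) ≤ (⨆ b ∈ Iic a, W b) ⊓ ⨆ b ∈ (Ici a)ᶜ, W b :=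
        inf_le_inf_right _ (le_biSup W self_mem_Iic)
    _ ≤ ⨆ b ∈ Iic a ∩ (Ici a)ᶜ, W b := hI _ _ (isLowerSet_Iic a) (isUpperSet_Ici a).compl
    _ = ⨆ b, ⨆ _ : b < a, W b := by rw [hIio]; rfl

theorem biSup_inf_biSup_le_biSup_inter_of_finite [IsModularLattice α] [Finite ι]
    (hW : ∀ a : ι, W a ⊓ (⨆ b, ⨆ _ : ¬ a ≤ b, W b) ≤ ⨆ b, ⨆ _ : b < a, W b)
    {B C : Set ι} (hB : IsLowerSet B) (hC : IsLowerSet C) :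
    (⨆ b ∈ B, W b) ⊓ (⨆ c ∈ C, W c) ≤ ⨆ a ∈ B ∩ C, W a := by
  induction B using WellFoundedLT.induction with
  | ind B ih =>
    by_cases hBC : B ⊆ C
    · rw [inter_eq_left.2 hBC]
      exact inf_le_left
    obtain ⟨a, ⟨haB, haC⟩, hmax⟩ := (toFinite (B \ C)).exists_maximal (sdiff_nonempty.2 hBC)
    have ha_max : ∀ b ∈ B, a ≤ b → b = a := fun b hb hab ↦
      le_antisymm (hmax ⟨hb, fun hbC ↦ haC (hC hab hbC)⟩ hab) hab
    have hsplit : ⨆ b ∈ B, W b = W a ⊔ ⨆ b ∈ B \ {a}, W b := by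
      rw [← iSup_insert, insert_sdiff_singleton, insert_eq_of_mem haB]
    have hinter : B \ {a} ∩ C = B ∩ C := by
      rw [← inter_sdiff_right_comm, sdiff_singleton_eq_self fun h ↦ haC h.2]
    have hbelow : ⨆ b, ⨆ _ : b < a, W b ≤ ⨆ b ∈ B \ {a}, W b :=
      biSup_mono fun b hb ↦ ⟨hB hb.le haB, hb.ne⟩
    have hside : (⨆ b ∈ B \ {a}, W b) ⊔ ⨆ c ∈ C, W c ≤ ⨆ b, ⨆ _ : ¬ a ≤ b, W b := by
      rw [← iSup_union]
      refine biSup_mono fun b hb hab ↦ ?_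
      rcases hb with ⟨hbB, hba⟩ | hbC
      · exact hba (ha_max b hbB hab)
      · exact haC (hC hab hbC)
    calc (⨆ b ∈ B, W b) ⊓ ⨆ c ∈ C, W c = (W a ⊔ ⨆ b ∈ B \ {a}, W b) ⊓ ⨆ c ∈ C, W c := by
          rw [hsplit]
      _ ≤ (⨆ b ∈ B \ {a}, W b) ⊓ ⨆ c ∈ C, W c :=
          sup_inf_le_inf_of_inf_sup_le
            ((inf_le_inf_left _ hside).trans ((hW a).trans hbelow))
      _ ≤ ⨆ b ∈ B \ {a} ∩ C, W b := ih _ (sdiff_singleton_ssubset.2 haB) (hB.erase ha_max)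
      _ = ⨆ b ∈ B ∩ C, W b := by rw [hinter]

end

theorem stmt_3_general {K V A : Type*} [Field K] [AddCommGroup V] [Module K V]
    [PartialOrder A] [Finite A]
    (W : A → Submodule K V) :
    (∀ B C : Set A, IsLowerSet B → IsLowerSet C →
        (⨆ b ∈ B, W b) ⊓ (⨆ c ∈ C, W c) ≤ ⨆ a ∈ B ∩ C, W a) ↔
      (∀ a : A, W a ⊓ (⨆ b, ⨆ _ : ¬ a ≤ b, W b) ≤ ⨆ b, ⨆ _ : b < a, W b) :=
  ⟨inf_iSup_not_ge_le_iSup_lt_of_inf_biSup_le W,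
    fun hW _ _ hB hC ↦ biSup_inf_biSup_le_biSup_inter_of_finite W hW hB hC⟩

/-- For a finite poset `𝒜`, a monotone `W : 𝒜 → Submodule K V`
satisfies the intersection property (I) iff it satisfies condition (C). -/
theorem stmt_3 {K V A : Type*} [Field K] [AddCommGroup V] [Module K V]
    [PartialOrder A] [Finite A]
    (W : A → Submodule K V) (hW : Monotone W) :
    (∀ B C : Set A, IsLowerSet B → IsLowerSet C →
        (⨆ b ∈ B, W b) ⊓ (⨆ c ∈ C, W c) ≤ ⨆ a ∈ B ∩ C, W a) ↔
      (∀ a : A, W a ⊓ (⨆ b, ⨆ _ : ¬ a ≤ b, W b) ≤ ⨆ b, ⨆ _ : b < a, W b) :=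
  stmt_3_general W
end

section
/- Let 𝒜 be a partially ordered set, V a vector space over a field K, and W : 𝒜 → Submodule K V a monotone map satisfying condition (C). Then every pre-decomposition s : 𝒜 → Submodule K V of W is an independent family, i.e. for every a ∈ 𝒜, s a ⊓ (⨆_{b ∈ 𝒜, b ≠ a} s b) = ⊥. -/
/-!
Given a vanishing finite sum of vectors `v i ∈ s i`, pick an index `m` maximal among those with
`v m ≠ 0`. Then `v m ∈ W m` is minus the sum of the other nonzero terms, each lying in some `W b`
with `¬ m ≤ b`, so condition (C) puts `v m` in `⨆ b < m, W b`, which meets `s m` only in `0`.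
-/

section

variable {R M A : Type*} [Ring R] [AddCommGroup M] [Module R M] [PartialOrder A]

theorem Submodule.mem_inf_iSup_not_le_of_sum_eq_zero {W : A → Submodule R M} {t : Finset A}
    {v : A → M} (hv : ∀ i ∈ t, v i ∈ W i) (hsum : ∑ i ∈ t, v i = 0) {m : A}
    (hm : Maximal (· ∈ t) m) :
    v m ∈ W m ⊓ ⨆ b, ⨆ _ : ¬ m ≤ b, W b := by
  classical
  refine ⟨hv m hm.1, ?_⟩
  rw [← t.add_sum_erase _ hm.1, add_eq_zero_iff_eq_neg] at hsum
  rw [hsum]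
  refine neg_mem (Submodule.sum_mem _ fun i hi => ?_)
  obtain ⟨hne, hit⟩ := Finset.mem_erase.mp hi
  have hnle : ¬ m ≤ i := fun hle => hne (le_antisymm (hm.2 hit hle) hle)
  exact Submodule.mem_iSup_of_mem i (Submodule.mem_iSup_of_mem hnle (hv i hit))

theorem iSupIndep_of_le_of_disjoint_iSup_lt {W s : A → Submodule R M}
    (hC : ∀ a, W a ⊓ (⨆ b, ⨆ _ : ¬ a ≤ b, W b) ≤ ⨆ b, ⨆ _ : b < a, W b)
    (hs_le : ∀ a, s a ≤ W a) (hs_disj : ∀ a, Disjoint (s a) (⨆ b, ⨆ _ : b < a, W b)) :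
    iSupIndep s := by
  classical
  rw [iSupIndep_iff_finsetSum_eq_zero_imp_eq_zero]
  intro t v hv hsum
  by_contra! ⟨i, hit, hvi⟩
  obtain ⟨m, hm⟩ := (t.filter (v · ≠ 0)).exists_maximal ⟨i, Finset.mem_filter.mpr ⟨hit, hvi⟩⟩
  obtain ⟨hmt, hvm⟩ := Finset.mem_filter.mp hm.1
  have hsum' : ∑ i ∈ t.filter (v · ≠ 0), v i = 0 := by rw [Finset.sum_filter_ne_zero, hsum]
  have hvW : ∀ i ∈ t.filter (v · ≠ 0), v i ∈ W i :=
    fun i hi => hs_le i (hv i (Finset.mem_filter.mp hi).1)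
  have hlow := hC m (Submodule.mem_inf_iSup_not_le_of_sum_eq_zero hvW hsum' hm)
  exact hvm ((Submodule.disjoint_def.mp (hs_disj m)) _ (hv m hmt) hlow)

end

theorem stmt_5_general {K V A : Type*} [Field K] [AddCommGroup V] [Module K V]
    [PartialOrder A]
    (W : A → Submodule K V)
    (hC : ∀ a : A, W a ⊓ (⨆ b, ⨆ _ : ¬ a ≤ b, W b) ≤ ⨆ b, ⨆ _ : b < a, W b)
    (s : A → Submodule K V)
    (hs : ∀ a : A, s a ≤ W a ∧ s a ⊓ (⨆ b, ⨆ _ : b < a, W b) = ⊥ ∧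
      s a ⊔ (⨆ b, ⨆ _ : b < a, W b) = W a) :
    ∀ a : A, s a ⊓ (⨆ b, ⨆ _ : b ≠ a, s b) = ⊥ := fun a =>
  (iSupIndep_of_le_of_disjoint_iSup_lt hC (fun a => (hs a).1)
    (fun a => disjoint_iff.mpr (hs a).2.1) a).eq_bot

/-- If a monotone `W : 𝒜 → Submodule K V` satisfies condition (C),
then every pre-decomposition of `W` is an independent family. -/
theorem stmt_5 {K V A : Type*} [Field K] [AddCommGroup V] [Module K V]
    [PartialOrder A]
    (W : A → Submodule K V) (hW : Monotone W)
    (hC : ∀ a : A, W a ⊓ (⨆ b, ⨆ _ : ¬ a ≤ b, W b) ≤ ⨆ b, ⨆ _ : b < a, W b)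
    (s : A → Submodule K V)
    (hs : ∀ a : A, s a ≤ W a ∧ s a ⊓ (⨆ b, ⨆ _ : b < a, W b) = ⊥ ∧
      s a ⊔ (⨆ b, ⨆ _ : b < a, W b) = W a) :
    ∀ a : A, s a ⊓ (⨆ b, ⨆ _ : b ≠ a, s b) = ⊥ :=
  stmt_5_general W hC s hs
end

section
/- Let 𝒜 be a well-founded partially ordered set, V a vector space over a field K, and W : 𝒜 → Submodule K V a monotone map. Then W is decomposable if and only if W satisfies condition (C). -/
/-!
The argument is purely lattice-theoretic: it works in any modular, complemented, compactly
generated complete lattice, such as `Submodule K V`. If `s` is a decomposition, then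
`W a = s a ⊔ Y` with `Y = ⨆ b < a, s b`, and `⨆ b, ⨆ _ : ¬ a ≤ b, W b` lies in the span `Z` of
the `s b` with `¬ a ≤ b`; since `Y ≤ Z` and `s a ⊓ Z = ⊥`, modularity gives `W a ⊓ Z ≤ Y`.

Conversely, given (C), let `s a` be a complement of `⨆ b < a, W b` in `W a`. Well-founded
induction gives `W a = ⨆ b ≤ a, s b`, and (C) makes `s a` disjoint from every `W b` with
`¬ a ≤ b`. Independence of `s` may be checked on finite sets, and a finite set is handled by
removing a maximal element `i`: no other element `j` of the set satisfies `i ≤ j`.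
-/

section

variable {α ι : Type*} [CompleteLattice α] [PartialOrder ι]

theorem iSup_le_eq_sup_iSup_lt (f : ι → α) (a : ι) :
    ⨆ b ≤ a, f b = f a ⊔ ⨆ b < a, f b := by
  simp_rw [← Set.mem_Iic, ← Set.Iio_insert, _root_.iSup_insert, Set.mem_Iio]

theorem Finset.supIndep_of_disjoint_iSup_not_le [IsModularLattice α] {f : ι → α}
    (hf : ∀ i, Disjoint (f i) (⨆ j, ⨆ _ : ¬ i ≤ j, f j)) (s : Finset ι) : s.SupIndep f := by
  classical
  induction s using Finset.strongInduction with
  | H s ih =>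
    obtain rfl | hs := s.eq_empty_or_nonempty
    · exact Finset.supIndep_empty f
    obtain ⟨i, hi⟩ := s.exists_maximal hs
    rw [← Finset.insert_erase hi.prop]
    refine (ih _ (Finset.erase_ssubset hi.prop)).insert ((hf i).mono_right ?_)
    refine Finset.sup_le fun j hj => le_iSup₂_of_le j (fun hij => ?_) le_rfl
    exact Finset.ne_of_mem_erase hj (hi.eq_of_ge (Finset.mem_of_mem_erase hj) hij)

theorem iSupIndep_of_disjoint_iSup_not_le [IsModularLattice α] [IsCompactlyGenerated α]
    {f : ι → α} (hf : ∀ i, Disjoint (f i) (⨆ j, ⨆ _ : ¬ i ≤ j, f j)) : iSupIndep f :=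
  iSupIndep_iff_supIndep.2 (Finset.supIndep_of_disjoint_iSup_not_le hf)

theorem inf_iSup_not_le_le_iSup_lt_of_iSupIndep [IsModularLattice α] {s W : ι → α}
    (hs : iSupIndep s) (hWs : ∀ a, W a = ⨆ b ≤ a, s b) (a : ι) :
    W a ⊓ ⨆ b, ⨆ _ : ¬ a ≤ b, W b ≤ ⨆ b < a, W b := by
  set Y := ⨆ b < a, s b
  set Z := ⨆ b, ⨆ _ : ¬ a ≤ b, s b
  have hsW (b : ι) : s b ≤ W b := (hWs b).ge.trans' (le_iSup₂_of_le b le_rfl le_rfl)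
  have hYZ : Y ≤ Z := iSup₂_mono' fun b hb => ⟨b, hb.not_ge, le_rfl⟩
  have hWZ : ⨆ b, ⨆ _ : ¬ a ≤ b, W b ≤ Z := iSup₂_le fun b hab => (hWs b).trans_le <|
    iSup₂_le fun c hcb => le_iSup₂_of_le c (fun hac => hab (hac.trans hcb)) le_rfl
  have hsZ : Disjoint (s a) Z :=
    (hs a).mono_right (iSup₂_mono' fun b hab => ⟨b, fun hba => hab hba.ge, le_rfl⟩)
  calc W a ⊓ ⨆ b, ⨆ _ : ¬ a ≤ b, W b ≤ (Y ⊔ s a) ⊓ Z := by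
        rw [hWs a, iSup_le_eq_sup_iSup_lt, sup_comm]
        exact inf_le_inf_left _ hWZ
    _ = Y ⊔ s a ⊓ Z := sup_inf_assoc_of_le _ hYZ
    _ = Y := by rw [hsZ.eq_bot, sup_bot_eq]
    _ ≤ ⨆ b < a, W b := iSup₂_mono fun b _ => hsW b

theorem eq_iSup_le_of_iSup_lt_sup_eq [WellFoundedLT ι] {s W : ι → α} (hW : Monotone W)
    (hsup : ∀ a, (⨆ b < a, W b) ⊔ s a = W a) (a : ι) : W a = ⨆ b ≤ a, s b := by
  refine le_antisymm ?_ (iSup₂_le fun b hba => (le_sup_right.trans (hsup b).le).trans (hW hba))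
  induction a using WellFoundedLT.induction with
  | _ a ih =>
    rw [← hsup a, iSup_le_eq_sup_iSup_lt, sup_comm]
    refine sup_le_sup_left (iSup₂_le fun b hba => (ih b hba).trans ?_) _
    exact iSup₂_le fun c hcb => le_iSup₂_of_le c (hcb.trans_lt hba) le_rfl

theorem exists_iSupIndep_of_inf_iSup_not_le_le_iSup_lt [IsModularLattice α]
    [ComplementedLattice α] [IsCompactlyGenerated α] [WellFoundedLT ι] {W : ι → α}
    (hW : Monotone W) (hC : ∀ a, W a ⊓ ⨆ b, ⨆ _ : ¬ a ≤ b, W b ≤ ⨆ b < a, W b) :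
    ∃ s : ι → α, iSupIndep s ∧ ∀ a, W a = ⨆ b ≤ a, s b := by
  choose s hdisj hsup using fun a =>
    IsModularLattice.exists_disjoint_and_sup_eq (iSup₂_le fun b (hba : b < a) => hW hba.le)
  have hsW (a : ι) : s a ≤ W a := le_sup_right.trans (hsup a).le
  refine ⟨s, iSupIndep_of_disjoint_iSup_not_le fun a => ?_, eq_iSup_le_of_iSup_lt_sup_eq hW hsup⟩
  have hsa : Disjoint (s a) (⨆ b, ⨆ _ : ¬ a ≤ b, W b) := disjoint_iff_inf_le.2 <|
    (le_inf inf_le_left ((inf_le_inf_right _ (hsW a)).trans (hC a))).trans (hdisj a).symm.le_bot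
  exact hsa.mono_right (iSup₂_mono fun b _ => hsW b)

theorem exists_iSupIndep_iSup_le_eq_iff [IsModularLattice α] [ComplementedLattice α]
    [IsCompactlyGenerated α] [WellFoundedLT ι] {W : ι → α} (hW : Monotone W) :
    (∃ s : ι → α, iSupIndep s ∧ ∀ a, W a = ⨆ b ≤ a, s b) ↔
      ∀ a, W a ⊓ ⨆ b, ⨆ _ : ¬ a ≤ b, W b ≤ ⨆ b < a, W b :=
  ⟨fun ⟨_, hs, hWs⟩ => inf_iSup_not_le_le_iSup_lt_of_iSupIndep hs hWs,
    exists_iSupIndep_of_inf_iSup_not_le_le_iSup_lt hW⟩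

end

/-- For a well-founded poset `𝒜`, a monotone `W : 𝒜 → Submodule K V`
is decomposable iff it satisfies condition (C). -/
theorem stmt_7 {K V A : Type*} [Field K] [AddCommGroup V] [Module K V]
    [PartialOrder A] [WellFoundedLT A]
    (W : A → Submodule K V) (hW : Monotone W) :
    (∃ s : A → Submodule K V,
        (∀ a : A, s a ⊓ (⨆ b, ⨆ _ : b ≠ a, s b) = ⊥) ∧
        (∀ a : A, W a = ⨆ b, ⨆ _ : b ≤ a, s b)) ↔
      (∀ a : A, W a ⊓ (⨆ b, ⨆ _ : ¬ a ≤ b, W b) ≤ ⨆ b, ⨆ _ : b < a, W b) := by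
  simpa only [iSupIndep_def, disjoint_iff] using exists_iSupIndep_iSup_le_eq_iff hW
end

section
/- Let 𝒜 be a well-founded partially ordered set, V a vector space over a field K, and W : 𝒜 → Submodule K V a monotone map. Then W is decomposable if and only if W satisfies the intersection property (I). -/
/-!
If `W a = ⨆ b ≤ a, s b` with `s` independent, then the value of `W` on a lower set `B` is
`⨆ b ∈ B, s b`, and independence makes such suprema meet like the index sets do.
Conversely, given (I), choose `s a` as a complement of `⨆ b < a, W b` inside `W a`. For a
lower set `B` not containing `a`, property (I) applied to `Iic a` and `B` puts
`s a ⊓ ⨆ b ∈ B, W b` below `⨆ b < a, W b`, so it vanishes; removing maximal elements one at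
a time then shows that `s` is independent, and well-founded induction gives
`W a = ⨆ b ≤ a, s b`.
-/

open Set

section

variable {α A : Type*} [CompleteLattice α] [PartialOrder A]

def IsDecomposition (W s : A → α) : Prop :=
  iSupIndep s ∧ ∀ a, W a = ⨆ b ≤ a, s b

def IntersectionProperty (W : A → α) : Prop :=
  ∀ B C : Set A, IsLowerSet B → IsLowerSet C →
    (⨆ b ∈ B, W b) ⊓ (⨆ c ∈ C, W c) ≤ ⨆ a ∈ B ∩ C, W a

theorem IsDecomposition.le {W s : A → α} (h : IsDecomposition W s) (a : A) : s a ≤ W a :=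
  h.2 a ▸ le_biSup s le_rfl

theorem IsDecomposition.biSup_eq {W s : A → α} (h : IsDecomposition W s) {D : Set A}
    (hD : IsLowerSet D) : ⨆ b ∈ D, W b = ⨆ b ∈ D, s b := by
  refine le_antisymm (iSup₂_le fun b hb ↦ ?_) (iSup₂_mono fun b _ ↦ h.le b)
  rw [h.2 b]
  exact iSup₂_le fun c hc ↦ le_biSup s (hD hc hb)

theorem IntersectionProperty.disjoint_biSup {W : A → α} (hI : IntersectionProperty W)
    {a : A} {x : α} (hxa : x ≤ W a) (hx : Disjoint (⨆ b < a, W b) x)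
    {B : Set A} (hB : IsLowerSet B) (ha : a ∉ B) : Disjoint x (⨆ b ∈ B, W b) := by
  refine disjoint_iff_inf_le.2 (le_trans (le_inf inf_le_left ?_) (hx.symm.eq_bot.le))
  calc x ⊓ ⨆ b ∈ B, W b ≤ (⨆ b ∈ Iic a, W b) ⊓ ⨆ b ∈ B, W b :=
        inf_le_inf_right _ (hxa.trans (le_biSup W self_mem_Iic))
    _ ≤ ⨆ b ∈ Iic a ∩ B, W b := hI _ _ (isLowerSet_Iic a) hB
    _ ≤ ⨆ b < a, W b :=
        biSup_mono fun b hb ↦ hb.1.lt_of_ne fun hba ↦ ha (hba ▸ hb.2)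

section Modular

variable [IsModularLattice α] [IsCompactlyGenerated α]

theorem iSupIndep.biSup_inf_biSup {ι : Type*} {f : ι → α} (hf : iSupIndep f) (B C : Set ι) :
    (⨆ i ∈ B, f i) ⊓ (⨆ i ∈ C, f i) = ⨆ i ∈ B ∩ C, f i := by
  have hle : ⨆ i ∈ B ∩ C, f i ≤ ⨆ i ∈ C, f i := biSup_mono fun _ hi ↦ hi.2
  have hdisj : Disjoint (⨆ i ∈ B \ C, f i) (⨆ i ∈ C, f i) :=
    hf.disjoint_biSup_biSup disjoint_sdiff_left
  rw [← inter_union_sdiff B C, iSup_union, sup_inf_assoc_of_le _ hle, hdisj.eq_bot, sup_bot_eq,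
    inter_union_sdiff]

theorem iSupIndep_of_disjoint_biSup_of_isLowerSet {f : A → α}
    (h : ∀ B : Set A, IsLowerSet B → ∀ a ∉ B, Disjoint (f a) (⨆ b ∈ B, f b)) :
    iSupIndep f := by
  classical
  rw [iSupIndep_iff_supIndep]
  intro F
  induction F using Finset.strongInduction with
  | H F ih =>
    rcases F.eq_empty_or_nonempty with rfl | hF
    · exact Finset.supIndep_empty f
    obtain ⟨m, hm⟩ := F.exists_maximal hF
    rw [← Finset.insert_erase hm.1]
    refine (ih _ (Finset.erase_ssubset hm.1)).insert ?_
    have hm_notMem : m ∉ (lowerClosure (F.erase m : Set A) : Set A) := by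
      rintro ⟨x, hx, hmx⟩
      exact Finset.ne_of_mem_erase hx (le_antisymm (hm.2 (Finset.mem_of_mem_erase hx) hmx) hmx)
    refine (h _ (lowerClosure _).lower m hm_notMem).mono_right ?_
    rw [Finset.sup_eq_iSup]
    exact biSup_mono fun _ hx ↦ subset_lowerClosure hx

theorem IsDecomposition.intersectionProperty {W s : A → α} (h : IsDecomposition W s) :
    IntersectionProperty W := by
  intro B C hB hC
  rw [h.biSup_eq hB, h.biSup_eq hC, h.1.biSup_inf_biSup, ← h.biSup_eq (hB.inter hC)]

theorem IntersectionProperty.exists_isDecomposition [ComplementedLattice α] [WellFoundedLT A]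
    {W : A → α}
    (hW : Monotone W) (hI : IntersectionProperty W) : ∃ s, IsDecomposition W s := by
  have hlt (a : A) : ⨆ b < a, W b ≤ W a := iSup₂_le fun _ hb ↦ hW hb.le
  choose s hdisj hsup using fun a ↦ IsModularLattice.exists_disjoint_and_sup_eq (hlt a)
  have hsW (a : A) : s a ≤ W a := hsup a ▸ le_sup_right
  refine ⟨s, iSupIndep_of_disjoint_biSup_of_isLowerSet fun B hB a ha ↦ ?_, fun a ↦ ?_⟩
  · exact (hI.disjoint_biSup (hsW a) (hdisj a) hB ha).mono_right (iSup₂_mono fun b _ ↦ hsW b)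
  · induction a using WellFoundedLT.induction with
    | ind a ih =>
      refine le_antisymm ?_ (iSup₂_le fun b hb ↦ (hsW b).trans (hW hb))
      rw [← hsup a]
      refine sup_le (iSup₂_le fun b hb ↦ ?_) (le_biSup s le_rfl)
      rw [ih b hb]
      exact iSup₂_le fun c hc ↦ le_biSup s (hc.trans hb.le)

theorem exists_isDecomposition_iff [ComplementedLattice α] [WellFoundedLT A] {W : A → α}
    (hW : Monotone W) : (∃ s, IsDecomposition W s) ↔ IntersectionProperty W :=
  ⟨fun ⟨_, h⟩ ↦ h.intersectionProperty, fun hI ↦ hI.exists_isDecomposition hW⟩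

end Modular

end

/-- For a well-founded poset `𝒜`, a monotone `W : 𝒜 → Submodule K V`
is decomposable iff it satisfies the intersection property (I). -/
theorem stmt_8 {K V A : Type*} [Field K] [AddCommGroup V] [Module K V]
    [PartialOrder A] [WellFoundedLT A]
    (W : A → Submodule K V) (hW : Monotone W) :
    (∃ s : A → Submodule K V,
        (∀ a : A, s a ⊓ (⨆ b, ⨆ _ : b ≠ a, s b) = ⊥) ∧
        (∀ a : A, W a = ⨆ b, ⨆ _ : b ≤ a, s b)) ↔
      (∀ B C : Set A, IsLowerSet B → IsLowerSet C →
        (⨆ b ∈ B, W b) ⊓ (⨆ c ∈ C, W c) ≤ ⨆ a ∈ B ∩ C, W a) := by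
  simp only [← disjoint_iff]
  exact exists_isDecomposition_iff hW
end

section
/- Let 𝒜 be any partially ordered set, V a vector space over a field K, and W : 𝒜 → Submodule K V a monotone map. Then W satisfies the intersection property (I) if and only if W satisfies condition (C2): for every a ∈ 𝒜, every n ∈ ℕ and every finite family a_0, …, a_n of elements of 𝒜, W a ⊓ W(⋃_{i=0}^{n} ↓a_i) ≤ W(↓a ∩ ⋃_{i=0}^{n} ↓a_i), where ↓x = {y ∈ 𝒜 : y ≤ x}. -/
/-!
Write `W(S) = ⨆ b ∈ S, W b`. For (C2) ⇒ (I), since submodule lattices are compactly generated,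
(I) reduces to `W(u) ⊓ W(v) ≤ W(↓u ∩ ↓v)` for finite `u` and `v`, proved by
induction on `u`. Adding a point `a` to `u` is handled by the modular law: (C2) for `a` and `v ∪ u`
splits `W a ⊓ (W(v) ⊔ W(u))` into a part below `W(↓a ∩ ↓v)` and a part absorbed by `W(u)`, which
leaves `W(u) ⊓ W(v)` for the induction hypothesis.
-/

open Set

theorem sup_inf_le_sup_of_inf_sup_le {L : Type*} [Lattice L] [IsModularLattice L]
    {x y z q r s : L} (hx : x ⊓ (z ⊔ y) ≤ q ⊔ r) (hr : r ≤ y) (hq : q ≤ z) (hyz : y ⊓ z ≤ s) :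
    (x ⊔ y) ⊓ z ≤ q ⊔ s := by
  have hxy : (x ⊔ y) ⊓ z ≤ q ⊔ y :=
    calc (x ⊔ y) ⊓ z ≤ (y ⊔ x) ⊓ (y ⊔ z) := by rw [sup_comm x]; exact inf_le_inf_left _ le_sup_right
      _ = y ⊔ x ⊓ (y ⊔ z) := sup_inf_assoc_of_le x le_sup_left
      _ ≤ q ⊔ y := sup_le le_sup_right <| by
        rw [sup_comm y]; exact hx.trans (sup_le_sup_left hr q)
  calc (x ⊔ y) ⊓ z ≤ (q ⊔ y) ⊓ z := le_inf hxy inf_le_right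
    _ = q ⊔ y ⊓ z := sup_inf_assoc_of_le y hq
    _ ≤ q ⊔ s := sup_le_sup_left hyz q

theorem IsCompactElement.exists_finite_subset_le_biSup {A L : Type*}
    [CompleteLattice L] {k : L} (hk : IsCompactElement k) (f : A → L) {B : Set A}
    (h : k ≤ ⨆ b ∈ B, f b) : ∃ u ⊆ B, u.Finite ∧ k ≤ ⨆ b ∈ u, f b := by
  rw [iSup_subtype'] at h
  obtain ⟨t, ht⟩ := CompleteLattice.IsCompactElement.exists_finset_of_le_iSup L hk _ h
  refine ⟨Subtype.val '' (t : Set B), by simp, t.finite_toSet.image _, ht.trans ?_⟩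
  rw [iSup_image]
  rfl

namespace Monotone

variable {A L : Type*} [Preorder A] [CompleteLattice L] {W : A → L}

theorem biSup_biUnion_Iic (hW : Monotone W) (s : Set A) :
    ⨆ b ∈ ⋃ c ∈ s, Iic c, W b = ⨆ c ∈ s, W c := by
  simp only [iSup_iUnion, mem_Iic]
  exact iSup_congr fun c => iSup_congr fun _ => biSup_le_eq_of_monotone hW c

theorem inf_biSup_le_of_fin_family (hW : Monotone W)
    (hC2 : ∀ (a : A) (n : ℕ) (c : Fin (n + 1) → A),
      W a ⊓ (⨆ b ∈ ⋃ i, Iic (c i), W b) ≤ ⨆ b ∈ Iic a ∩ ⋃ i, Iic (c i), W b)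
    (a : A) {s : Set A} (hs : s.Finite) :
    W a ⊓ ⨆ b ∈ s, W b ≤ ⨆ b ∈ Iic a ∩ ⋃ c ∈ s, Iic c, W b := by
  obtain ⟨_ | n, c, -, rfl⟩ := hs.fin_param
  · simp [range_eq_empty c]
  · rw [← hW.biSup_biUnion_Iic (range c), biUnion_range]
    exact hC2 a n c

theorem biSup_inf_biSup_le_of_finite [IsModularLattice L] (hW : Monotone W)
    (hC2 : ∀ (a : A) {s : Set A}, s.Finite →
      W a ⊓ ⨆ b ∈ s, W b ≤ ⨆ b ∈ Iic a ∩ ⋃ c ∈ s, Iic c, W b)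
    {u v : Set A} (hu : u.Finite) (hv : v.Finite) :
    (⨆ b ∈ u, W b) ⊓ ⨆ b ∈ v, W b ≤ ⨆ b ∈ (⋃ c ∈ u, Iic c) ∩ ⋃ c ∈ v, Iic c, W b := by
  induction u, hu using Set.Finite.induction_on with
  | empty => simp
  | @insert a u _ hu ih =>
    rw [iSup_insert, biUnion_insert, union_inter_distrib_right, iSup_union]
    refine sup_inf_le_sup_of_inf_sup_le (r := ⨆ b ∈ Iic a ∩ ⋃ c ∈ u, Iic c, W b) ?_ ?_ ?_ ih
    · simpa only [iSup_union, biUnion_union, inter_union_distrib_left] using hC2 a (hv.union hu)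
    · exact hW.biSup_biUnion_Iic u ▸ biSup_mono fun _ => And.right
    · exact hW.biSup_biUnion_Iic v ▸ biSup_mono fun _ => And.right

theorem biSup_inf_biSup_le_of_isLowerSet [IsModularLattice L] [IsCompactlyGenerated L]
    (hW : Monotone W)
    (hC2 : ∀ (a : A) {s : Set A}, s.Finite →
      W a ⊓ ⨆ b ∈ s, W b ≤ ⨆ b ∈ Iic a ∩ ⋃ c ∈ s, Iic c, W b)
    {B C : Set A} (hB : IsLowerSet B) (hC : IsLowerSet C) :
    (⨆ b ∈ B, W b) ⊓ (⨆ c ∈ C, W c) ≤ ⨆ a ∈ B ∩ C, W a := by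
  refine le_iff_compact_le_imp.2 fun k hk hkBC => ?_
  obtain ⟨u, huB, hu, hku⟩ := hk.exists_finite_subset_le_biSup W (hkBC.trans inf_le_left)
  obtain ⟨v, hvC, hv, hkv⟩ := hk.exists_finite_subset_le_biSup W (hkBC.trans inf_le_right)
  have huB' : ⋃ c ∈ u, Iic c ⊆ B := iUnion₂_subset fun c hc => hB.Iic_subset (huB hc)
  have hvC' : ⋃ c ∈ v, Iic c ⊆ C := iUnion₂_subset fun c hc => hC.Iic_subset (hvC hc)
  calc k ≤ (⨆ b ∈ u, W b) ⊓ ⨆ b ∈ v, W b := le_inf hku hkv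
    _ ≤ ⨆ b ∈ (⋃ c ∈ u, Iic c) ∩ ⋃ c ∈ v, Iic c, W b := hW.biSup_inf_biSup_le_of_finite hC2 hu hv
    _ ≤ ⨆ a ∈ B ∩ C, W a := biSup_mono fun _ hb => ⟨huB' hb.1, hvC' hb.2⟩

end Monotone

/-- For any poset `𝒜`, a monotone `W : 𝒜 → Submodule K V` satisfies
the intersection property (I) iff it satisfies condition (C2): for every `a`, `n`,
and finite family `a_0, …, a_n`,
`W a ⊓ W(⋃ i, ↓aᵢ) ≤ W(↓a ∩ ⋃ i, ↓aᵢ)`. -/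
theorem stmt_10 {K V A : Type*} [Field K] [AddCommGroup V] [Module K V]
    [PartialOrder A]
    (W : A → Submodule K V) (hW : Monotone W) :
    (∀ B C : Set A, IsLowerSet B → IsLowerSet C →
        (⨆ b ∈ B, W b) ⊓ (⨆ c ∈ C, W c) ≤ ⨆ a ∈ B ∩ C, W a) ↔
      (∀ (a : A) (n : ℕ) (c : Fin (n + 1) → A),
        W a ⊓ (⨆ b ∈ (⋃ i, Set.Iic (c i)), W b) ≤
          ⨆ b ∈ (Set.Iic a ∩ ⋃ i, Set.Iic (c i)), W b) := by
  refine ⟨fun hI a n c => ?_, fun hC2 B C hB hC => ?_⟩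
  · have hWa : W a ≤ ⨆ b ∈ Iic a, W b := le_biSup W self_mem_Iic
    exact (inf_le_inf_right _ hWa).trans
      (hI _ _ (isLowerSet_Iic a) (isLowerSet_iUnion fun i => isLowerSet_Iic (c i)))
  · exact hW.biSup_inf_biSup_le_of_isLowerSet (hW.inf_biSup_le_of_fin_family hC2) hB hC
end

section
/- Let 𝒜 be a partially ordered set, B ⊆ 𝒜 a lower set of 𝒜 regarded as a partially ordered set with the induced order, V a vector space over a field K, and W : 𝒜 → Submodule K V a monotone map. If W is decomposable, then the restriction of W to B is decomposable. -/
theorem iSupIndep_iff_inf_iSup_ne_eq_bot {α ι : Type*} [CompleteLattice α] {t : ι → α} :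
    iSupIndep t ↔ ∀ i, t i ⊓ ⨆ j, ⨆ _ : j ≠ i, t j = ⊥ := by
  simp only [iSupIndep_def, disjoint_iff]

theorem IsLowerSet.iSup_le_subtype {α β : Type*} [CompleteLattice α] [Preorder β] {B : Set β}
    (hB : IsLowerSet B) (s : β → α) (a : B) :
    ⨆ b, ⨆ _ : b ≤ (a : β), s b = ⨆ b : B, ⨆ _ : b ≤ a, s b := by
  apply le_antisymm
  · exact iSup₂_le fun b hb => le_iSup₂_of_le (⟨b, hB hb a.2⟩ : B) hb le_rfl
  · exact iSup₂_le fun b hb => le_iSup₂_of_le (b : β) hb le_rfl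

theorem stmt_11_general {K V A : Type*} [Field K] [AddCommGroup V] [Module K V]
    [PartialOrder A]
    (B : Set A) (hB : IsLowerSet B)
    (W : A → Submodule K V)
    (hdec : ∃ s : A → Submodule K V,
        (∀ a : A, s a ⊓ (⨆ b, ⨆ _ : b ≠ a, s b) = ⊥) ∧
        (∀ a : A, W a = ⨆ b, ⨆ _ : b ≤ a, s b)) :
    ∃ s : B → Submodule K V,
      (∀ a : B, s a ⊓ (⨆ b, ⨆ _ : b ≠ a, s b) = ⊥) ∧
      (∀ a : B, W a = ⨆ b : B, ⨆ _ : b ≤ a, s b) := by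
  obtain ⟨s, hind, hsup⟩ := hdec
  refine ⟨s ∘ (↑), ?_, fun a => (hsup a).trans (hB.iSup_le_subtype s a)⟩
  exact iSupIndep_iff_inf_iSup_ne_eq_bot.mp <|
    (iSupIndep_iff_inf_iSup_ne_eq_bot.mpr hind).comp Subtype.val_injective

/-- If a monotone `W : 𝒜 → Submodule K V` is decomposable and
`B ⊆ 𝒜` is a lower set (with the induced order), then the restriction of `W`
to `B` is decomposable. -/
theorem stmt_11 {K V A : Type*} [Field K] [AddCommGroup V] [Module K V]
    [PartialOrder A]
    (B : Set A) (hB : IsLowerSet B)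
    (W : A → Submodule K V) (hW : Monotone W)
    (hdec : ∃ s : A → Submodule K V,
        (∀ a : A, s a ⊓ (⨆ b, ⨆ _ : b ≠ a, s b) = ⊥) ∧
        (∀ a : A, W a = ⨆ b, ⨆ _ : b ≤ a, s b)) :
    ∃ s : B → Submodule K V,
      (∀ a : B, s a ⊓ (⨆ b, ⨆ _ : b ≠ a, s b) = ⊥) ∧
      (∀ a : B, W a = ⨆ b : B, ⨆ _ : b ≤ a, s b) :=
  stmt_11_general B hB W hdec
end

section
/- Let 𝒜 and ℬ be partially ordered sets, f : 𝒜 → ℬ an order embedding (a₁ ≤ a₂ if and only if f a₁ ≤ f a₂), V a vector space over a field K, and W : 𝒜 → Submodule K V a monotone map, with pushforward f_*W : ℬ → Submodule K V given by f_*W(b) = ⨆_{a ∈ 𝒜, f a ≤ b} W a. If t : ℬ → Submodule K V is a decomposition of f_*W, then the family s : 𝒜 → Submodule K V defined by s a = t (f a) is a decomposition of W. -/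
/-!
Every summand `t c` with `c` outside the image of `f` vanishes: `t c` lies below
`f_*W c = ⨆_{f a ≤ c} W a`, and each `W a = f_*W (f a)` is a sum of summands `t c'` with
`c' ≤ f a < c`, so independence forces `t c = ⊥`. Hence `f_*W (f a) = W a` is already the sum
of the `t (f b)` with `b ≤ a`, and independence passes to the subfamily `t ∘ f`.
-/

section Pushforward

variable {α A B : Type*} [CompleteLattice α] [PartialOrder A] [PartialOrder B]

theorem Monotone.iSup_orderEmbedding_le_apply {W : A → α} (hW : Monotone W) (f : A ↪o B)
    (a : A) : ⨆ a', ⨆ _ : f a' ≤ f a, W a' = W a :=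
  le_antisymm (iSup₂_le fun _ h => hW (f.le_iff_le.mp h)) (le_iSup₂_of_le a le_rfl le_rfl)

theorem eq_bot_of_notMem_range_of_decomposition (f : A ↪o B) (W : A → α) {t : B → α}
    (ht : iSupIndep t) (hsum : ∀ b, ⨆ a, ⨆ _ : f a ≤ b, W a = ⨆ c, ⨆ _ : c ≤ b, t c)
    {c : B} (hc : c ∉ Set.range f) : t c = ⊥ := by
  have hW_le (a : A) : W a ≤ ⨆ c', ⨆ _ : c' ≤ f a, t c' :=
    hsum (f a) ▸ le_iSup₂_of_le a le_rfl le_rfl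
  have htc_le : t c ≤ ⨆ a, ⨆ _ : f a ≤ c, W a := hsum c ▸ le_iSup₂_of_le c le_rfl le_rfl
  refine (ht c).eq_bot_of_le (htc_le.trans (iSup₂_le fun a ha => ?_))
  refine (hW_le a).trans (iSup₂_le fun c' hc' => le_iSup₂_of_le c' ?_ le_rfl)
  rintro rfl
  exact hc ⟨a, le_antisymm ha hc'⟩

theorem iSup_le_apply_eq_of_eq_bot_of_notMem_range (f : A ↪o B) {t : B → α}
    (ht : ∀ c ∉ Set.range f, t c = ⊥) (a : A) :
    ⨆ c, ⨆ _ : c ≤ f a, t c = ⨆ b, ⨆ _ : b ≤ a, t (f b) := by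
  refine le_antisymm (iSup₂_le fun c hc => ?_)
    (iSup₂_le fun b hb => le_iSup₂_of_le (f b) (f.monotone hb) le_rfl)
  by_cases hcf : c ∈ Set.range f
  · obtain ⟨b, rfl⟩ := hcf
    exact le_iSup₂_of_le (f := fun b _ => t (f b)) b (f.le_iff_le.mp hc) le_rfl
  · simp only [ht c hcf, bot_le]

end Pushforward

/-- For an order embedding `f : 𝒜 ↪o ℬ` and a monotone
`W : 𝒜 → Submodule K V` with pushforward `f_*W (b) = ⨆_{f a ≤ b} W a`,
if `t` is a decomposition of `f_*W` then `a ↦ t (f a)` is a decomposition of `W`. -/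
theorem stmt_14 {K V A B : Type*} [Field K] [AddCommGroup V] [Module K V]
    [PartialOrder A] [PartialOrder B]
    (f : A ↪o B) (W : A → Submodule K V) (hW : Monotone W)
    (t : B → Submodule K V)
    (ht_indep : ∀ b : B, t b ⊓ (⨆ c, ⨆ _ : c ≠ b, t c) = ⊥)
    (ht_sum : ∀ b : B, (⨆ a, ⨆ _ : f a ≤ b, W a) = ⨆ c, ⨆ _ : c ≤ b, t c) :
    (∀ a : A, t (f a) ⊓ (⨆ b, ⨆ _ : b ≠ a, t (f b)) = ⊥) ∧
      (∀ a : A, W a = ⨆ b, ⨆ _ : b ≤ a, t (f b)) := by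
  have ht : iSupIndep t := fun b => disjoint_iff.mpr (ht_indep b)
  refine ⟨fun a => disjoint_iff.mp (ht.comp f.injective a), fun a => ?_⟩
  rw [← hW.iSup_orderEmbedding_le_apply f a, ht_sum (f a)]
  exact iSup_le_apply_eq_of_eq_bot_of_notMem_range f
    (fun _ hc => eq_bot_of_notMem_range_of_decomposition f W ht ht_sum hc) a
end
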